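/- Let R be a commutative integral domain and let ⋆ be a semistar operation on R that is stable and of finite type. Let I be a nonzero ideal of R such that I^⋆ ∩ R ≠ R. If every quasi-⋆-prime ideal minimal over I is the radical of a ⋆-finite ideal, then ⋆-Min(I) is finite. -/

import Mathlib

open Pointwise

/-- A semistar operation on an integral domain `R` with quotient field `K`:
a map `E ↦ E^⋆` on the nonzero `R`-submodules of `K` satisfying the usual axioms.
(The map is defined on all submodules, but the axioms are only required for the
nonzero ones.) -/
structure SemistarOperation (R K : Type*) [CommRing R] [IsDomain R] [Field K]
    [Algebra R K] [IsFractionRing R K] where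
  star : Submodule R K → Submodule R K
  smul_star : ∀ (x : K), x ≠ 0 → ∀ E : Submodule R K, E ≠ ⊥ → star (x • E) = x • star E
  mono : ∀ E F : Submodule R K, E ≠ ⊥ → E ≤ F → star E ≤ star F
  le_star : ∀ E : Submodule R K, E ≠ ⊥ → E ≤ star E
  star_star : ∀ E : Submodule R K, E ≠ ⊥ → star (star E) = star E

namespace SemistarOperation

variable {R K : Type*} [CommRing R] [IsDomain R] [Field K] [Algebra R K] [IsFractionRing R K]
variable (s : SemistarOperation R K)

/-- `⋆` is of finite type: for every nonzero submodule `E`, the module `E^⋆` is the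
union of the `F^⋆` over the nonzero finitely generated submodules `F ⊆ E`. -/
def FiniteType : Prop :=
  ∀ E : Submodule R K, E ≠ ⊥ → ∀ x : K,
    x ∈ s.star E ↔ ∃ F : Submodule R K, F.FG ∧ F ≠ ⊥ ∧ F ≤ E ∧ x ∈ s.star F

/-- `I^⋆`, for an ideal `I` of `R` (viewing `I` as a submodule of `K`). -/
def idealStar (I : Ideal R) : Submodule R K :=
  s.star (Submodule.map (Algebra.linearMap R K) I)

/-- `I^⋆ ∩ R`, as an ideal of `R`. -/
def contract (I : Ideal R) : Ideal R :=
  Submodule.comap (Algebra.linearMap R K) (s.idealStar I)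

/-- A (nonzero) ideal `I` of `R` is a quasi-`⋆`-ideal if `I^⋆ ∩ R = I`. -/
def IsQuasiStarIdeal (I : Ideal R) : Prop :=
  I ≠ ⊥ ∧ s.contract I = I

/-- A nonzero ideal `L` of `R` is `⋆`-finite if `L^⋆ = F^⋆` for some nonzero
finitely generated ideal `F` of `R`. -/
def IsStarFinite (L : Ideal R) : Prop :=
  L ≠ ⊥ ∧ ∃ F : Ideal R, F.FG ∧ F ≠ ⊥ ∧ s.idealStar F = s.idealStar L

/-- `⋆` is stable: it distributes over finite intersections (of nonzero submodules
with nonzero intersection). -/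
def Stable : Prop :=
  ∀ E F : Submodule R K, E ≠ ⊥ → F ≠ ⊥ → E ⊓ F ≠ ⊥ →
    s.star (E ⊓ F) = s.star E ⊓ s.star F

/-- `⋆-Min(I)`: the set of quasi-`⋆`-prime ideals of `R` minimal over `I`. -/
def starMin (I : Ideal R) : Set (Ideal R) :=
  {P | Minimal (fun Q : Ideal R => Q.IsPrime ∧ s.IsQuasiStarIdeal Q ∧ I ≤ Q) P}

/-- A nonzero ideal `I` of `R` is a `⋆`-SFT-ideal if there are a finitely generated
ideal `J ⊆ I` and a positive integer `k` with `a ^ k ∈ J^⋆` for every `a ∈ I^⋆`. -/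
def IsSFT (I : Ideal R) : Prop :=
  I ≠ ⊥ ∧ ∃ J : Ideal R, J.FG ∧ J ≤ I ∧ ∃ k : ℕ, 0 < k ∧
    ∀ a ∈ s.idealStar I, a ^ k ∈ s.idealStar J

/-- `R` is a `⋆`-SFT-ring if every nonzero ideal of `R` is a `⋆`-SFT-ideal. -/
def IsSFTRing : Prop := ∀ I : Ideal R, I ≠ ⊥ → s.IsSFT I

end SemistarOperation

/-! Stability forces `Q^⋆ ∩ R ∈ {Q, R}` for every nonzero prime `Q`, because
`Q ∩ xR = xQ` for `x ∉ Q`; finite type then witnesses `Q^⋆ ∩ R = R` by a finitely generated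
ideal inside `Q`. Hence every prime over `I` contains a finitely generated ideal that is either
`⋆`-trivial or an `F` with `F^⋆ = L^⋆` for some `P = √L ∈ ⋆-Min(I)`, and such an `F` lies in a
quasi-`⋆`-prime exactly when `P` does. The closed set `V(I)` of `Spec R` is quasi-compact in the
constructible topology, where each `V(F)` with `F` finitely generated is open, so finitely many of
these ideals cover it, and each `P ∈ ⋆-Min(I)` is determined by one of them. -/

namespace PrimeSpectrum

open Topology

variable {A : Type*} [CommRing A]

theorem isClosed_constructibleTopology_zeroLocus (s : Set A) :
    IsClosed[constructibleTopology (PrimeSpectrum A)] (zeroLocus s) := by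
  rw [← Set.biUnion_of_singleton s, zeroLocus_iUnion₂]
  refine @isClosed_biInter _ _ (constructibleTopology _) _ _ fun x _ => ?_
  rw [← @isOpen_compl_iff _ _ (constructibleTopology _), ← basicOpen_eq_zeroLocus_compl]
  exact (isCompact_basicOpen x).isOpen_constructibleTopology_of_isOpen (basicOpen x).isOpen

theorem isOpen_constructibleTopology_zeroLocus_of_fg {I : Ideal A} (hI : I.FG) :
    IsOpen[constructibleTopology (PrimeSpectrum A)] (zeroLocus I) :=
  IsCompact.isOpen_constructibleTopology_of_isClosed
    (isCompact_isOpen_iff_ideal.2 ⟨I, hI, rfl⟩).1 (isClosed_zeroLocus _)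

end PrimeSpectrum

open PrimeSpectrum in
theorem Ideal.exists_finite_subset_forall_isPrime_exists_le {A : Type*} [CommRing A]
    {I : Ideal A} {C : Set (Ideal A)} (hC : ∀ F ∈ C, F.FG)
    (hcov : ∀ Q : Ideal A, Q.IsPrime → I ≤ Q → ∃ F ∈ C, F ≤ Q) :
    ∃ t ⊆ C, t.Finite ∧ ∀ Q : Ideal A, Q.IsPrime → I ≤ Q → ∃ F ∈ t, F ≤ Q := by
  let X := WithConstructibleTopology (PrimeSpectrum A)
  have hcpt : IsCompact (WithTopology.ofTopology ⁻¹' zeroLocus I : Set X) := by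
    refine IsClosed.isCompact ((WithTopology.isClosed_iff _).2 ?_)
    exact isClosed_constructibleTopology_zeroLocus _
  obtain ⟨t, htC, ht, hsub⟩ := hcpt.elim_finite_subcover_image
    (b := C) (c := fun F => (WithTopology.ofTopology ⁻¹' zeroLocus F : Set X))
    (fun F hF =>
      (WithTopology.isOpen_iff _).2 (isOpen_constructibleTopology_zeroLocus_of_fg (hC F hF)))
    fun x hx => by
      obtain ⟨F, hFC, hFQ⟩ := hcov _ x.ofTopology.2 hx
      exact Set.mem_biUnion hFC hFQ
  refine ⟨t, htC, ht, fun Q hQ hIQ => ?_⟩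
  simpa using hsub (a := WithTopology.toTopology _ ⟨Q, hQ⟩) hIQ

theorem Submodule.exists_fg_le_map_eq_of_le_map {R M N : Type*} [CommRing R] [AddCommGroup M]
    [Module R M] [AddCommGroup N] [Module R N] {f : M →ₗ[R] N} (hf : Function.Injective f)
    {Q : Submodule R M} {F : Submodule R N} (hF : F.FG) (hFQ : F ≤ Q.map f) :
    ∃ J : Submodule R M, J.FG ∧ J ≤ Q ∧ J.map f = F := by
  have hmap : (F.comap f).map f = F :=
    Submodule.map_comap_eq_self (hFQ.trans (LinearMap.map_le_range))
  refine ⟨F.comap f, Submodule.fg_of_fg_map_injective f hf (by rwa [hmap]), ?_, hmap⟩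
  exact (Submodule.comap_mono hFQ).trans (Submodule.comap_map_eq_of_injective hf Q).le

theorem Ideal.map_inf_span_singleton_eq_smul {R K : Type*} [CommRing R] [CommRing K]
    [Algebra R K] (hinj : Function.Injective (algebraMap R K)) {Q : Ideal R} (hQ : Q.IsPrime)
    {x : R} (hx : x ∉ Q) :
    Submodule.map (Algebra.linearMap R K) Q ⊓ Submodule.span R {algebraMap R K x} =
      algebraMap R K x • Submodule.map (Algebra.linearMap R K) Q := by
  apply le_antisymm
  · rintro _ ⟨⟨q, hq, rfl⟩, hy⟩
    obtain ⟨a, ha⟩ := Submodule.mem_span_singleton.1 hy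
    have haxQ : a * x ∈ Q := by
      rwa [hinj (by simpa [Algebra.smul_def] using ha : algebraMap R K (a * x) = _)]
    refine ⟨algebraMap R K a, ⟨a, (hQ.mem_or_mem haxQ).resolve_right hx, rfl⟩, ?_⟩
    simp [← ha, Algebra.smul_def, mul_comm]
  · rintro _ ⟨_, ⟨q, hq, rfl⟩, rfl⟩
    refine ⟨⟨x * q, Q.mul_mem_left x hq, by simp⟩, ?_⟩
    exact Submodule.mem_span_singleton.2 ⟨q, by simp [Algebra.smul_def, mul_comm]⟩

theorem IsFractionRing.map_linearMap_ne_bot {R K : Type*} [CommRing R] [CommRing K]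
    [Algebra R K] [IsFractionRing R K] {I : Ideal R} (hI : I ≠ ⊥) :
    Submodule.map (Algebra.linearMap R K) I ≠ ⊥ := by
  simpa using (Submodule.map_injective_of_injective (f := Algebra.linearMap R K)
    (IsFractionRing.injective R K)).ne hI

namespace SemistarOperation

variable {R K : Type*} [CommRing R] [IsDomain R] [Field K] [Algebra R K] [IsFractionRing R K]
variable (s : SemistarOperation R K)

theorem le_contract {I : Ideal R} (hI : I ≠ ⊥) : I ≤ s.contract I := fun _ hx =>
  s.le_star _ (IsFractionRing.map_linearMap_ne_bot hI) (Submodule.mem_map_of_mem hx)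

theorem contract_mono {I J : Ideal R} (hI : I ≠ ⊥) (hIJ : I ≤ J) :
    s.contract I ≤ s.contract J :=
  Submodule.comap_mono
    (s.mono _ _ (IsFractionRing.map_linearMap_ne_bot hI) (Submodule.map_mono hIJ))

theorem contract_eq_top_iff {I : Ideal R} : s.contract I = ⊤ ↔ (1 : K) ∈ s.idealStar I := by
  simp [Ideal.eq_top_iff_one, contract]

theorem isQuasiStarIdeal_sInf {c : Set (Ideal R)} (hc : ∀ J ∈ c, s.IsQuasiStarIdeal J)
    (h0 : sInf c ≠ ⊥) : s.IsQuasiStarIdeal (sInf c) :=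
  ⟨h0, le_antisymm (le_sInf fun J hJ => (s.contract_mono h0 (sInf_le hJ)).trans (hc J hJ).2.le)
    (s.le_contract h0)⟩

theorem exists_mem_starMin_le {I Q : Ideal R} (hI : I ≠ ⊥) (hQ : Q.IsPrime)
    (hQs : s.IsQuasiStarIdeal Q) (hIQ : I ≤ Q) : ∃ P ∈ s.starMin I, P ≤ Q := by
  let S : Set (Ideal R) := {P | P.IsPrime ∧ s.IsQuasiStarIdeal P ∧ I ≤ P}
  have hchain : ∀ c ⊆ S, IsChain (· ≤ ·) c → c.Nonempty → ∃ P ∈ S, ∀ J ∈ c, P ≤ J := by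
    intro c hcS hc hne
    have hIc : I ≤ sInf c := le_sInf fun P hP => (hcS hP).2.2
    have hc0 : sInf c ≠ ⊥ := fun h => hI (le_bot_iff.1 (h ▸ hIc))
    exact ⟨sInf c, ⟨Ideal.sInf_isPrime_of_isChain hne hc fun P hP => (hcS hP).1,
      s.isQuasiStarIdeal_sInf (fun P hP => (hcS hP).2.1) hc0, hIc⟩, fun P hP => sInf_le hP⟩
  obtain ⟨P, hPQ, hP⟩ := @zorn_le_nonempty₀ (Ideal R)ᵒᵈ _ S
    (fun c hcS hc J hJ => hchain c hcS hc.symm ⟨J, hJ⟩) Q ⟨hQ, hQs, hIQ⟩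
  exact ⟨P, hP, hPQ⟩

theorem le_of_idealStar_eq_of_le {F L Q : Ideal R} (hF : F ≠ ⊥) (hL : L ≠ ⊥)
    (hFL : s.idealStar F = s.idealStar L) (hQ : s.IsQuasiStarIdeal Q) (hFQ : F ≤ Q) : L ≤ Q :=
  calc L ≤ s.contract L := s.le_contract hL
    _ = s.contract F := by rw [contract, contract, hFL]
    _ ≤ s.contract Q := s.contract_mono hF hFQ
    _ = Q := hQ.2

theorem IsStarFinite.exists_fg_le_iff_radical_le {L : Ideal R} (hL : s.IsStarFinite L) :
    ∃ F : Ideal R, F.FG ∧ ∀ Q : Ideal R, Q.IsPrime → s.IsQuasiStarIdeal Q →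
      (F ≤ Q ↔ L.radical ≤ Q) := by
  obtain ⟨hL0, F, hFfg, hF0, hFL⟩ := hL
  refine ⟨F, hFfg, fun Q hQ hQs => ?_⟩
  rw [hQ.isRadical.radical_le_iff]
  exact ⟨s.le_of_idealStar_eq_of_le hF0 hL0 hFL hQs,
    s.le_of_idealStar_eq_of_le hL0 hF0 hFL.symm hQs⟩

theorem Stable.contract_eq_self_or_eq_top {s : SemistarOperation R K} (hs : s.Stable)
    {Q : Ideal R} (hQ : Q.IsPrime) (hQ0 : Q ≠ ⊥) : s.contract Q = Q ∨ s.contract Q = ⊤ := by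
  by_cases hle : s.contract Q ≤ Q
  · exact .inl (hle.antisymm (s.le_contract hQ0))
  obtain ⟨x, hxc, hxQ⟩ := SetLike.not_le_iff_exists.1 hle
  set x' := algebraMap R K x
  set E := Submodule.map (Algebra.linearMap R K) Q
  have hx0 : x' ≠ 0 := (map_ne_zero_iff _ (IsFractionRing.injective R K)).2
    fun h => hxQ (h ▸ Q.zero_mem)
  have hE0 : E ≠ ⊥ := IsFractionRing.map_linearMap_ne_bot hQ0
  have hspan0 : Submodule.span R {x'} ≠ ⊥ := by simpa using hx0
  have hinter : E ⊓ Submodule.span R {x'} = x' • E :=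
    Ideal.map_inf_span_singleton_eq_smul (IsFractionRing.injective R K) hQ hxQ
  have hsmul0 : x' • E ≠ ⊥ := fun h =>
    hE0 (by rw [← inv_smul_smul₀ hx0 E, h, Submodule.smul_bot'])
  -- Stability turns `x' • E^⋆ = (E ∩ x'R)^⋆` into `E^⋆ ∩ (x'R)^⋆`, which contains `x'`.
  have hx'mem : x' ∈ x' • s.star E := by
    rw [← s.smul_star x' hx0 E hE0, ← hinter, hs E _ hE0 hspan0 (hinter ▸ hsmul0)]
    exact ⟨hxc, s.le_star _ hspan0 (Submodule.mem_span_singleton_self x')⟩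
  obtain ⟨e, he, hex⟩ := (Submodule.mem_smul_pointwise_iff_exists _ _ _).1 hx'mem
  have he1 : e = 1 := mul_left_cancel₀ hx0 (by rw [mul_one]; exact hex)
  exact .inr (s.contract_eq_top_iff.2 (he1 ▸ he))

theorem FiniteType.exists_fg_le_contract_eq_top {s : SemistarOperation R K}
    (hs : s.FiniteType) {Q : Ideal R} (hQ0 : Q ≠ ⊥) (hQ : s.contract Q = ⊤) :
    ∃ F : Ideal R, F.FG ∧ F ≠ ⊥ ∧ F ≤ Q ∧ s.contract F = ⊤ := by
  obtain ⟨F, hFfg, hF0, hFQ, h1F⟩ :=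
    (hs _ (IsFractionRing.map_linearMap_ne_bot hQ0) 1).1 (s.contract_eq_top_iff.1 hQ)
  obtain ⟨J, hJfg, hJQ, rfl⟩ :=
    Submodule.exists_fg_le_map_eq_of_le_map (IsFractionRing.injective R K) hFfg hFQ
  exact ⟨J, hJfg, by rintro rfl; simp at hF0, hJQ, s.contract_eq_top_iff.2 h1F⟩

theorem exists_starMin_le_or_exists_fg_contract_eq_top {s : SemistarOperation R K}
    (hstable : s.Stable) (hs : s.FiniteType) {I Q : Ideal R} (hI : I ≠ ⊥) (hQ : Q.IsPrime)
    (hIQ : I ≤ Q) : (s.IsQuasiStarIdeal Q ∧ ∃ P ∈ s.starMin I, P ≤ Q) ∨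
      ∃ J : Ideal R, J.FG ∧ J ≠ ⊥ ∧ J ≤ Q ∧ s.contract J = ⊤ := by
  have hQ0 : Q ≠ ⊥ := fun h => hI (le_bot_iff.1 (h ▸ hIQ))
  refine (hstable.contract_eq_self_or_eq_top hQ hQ0).imp (fun hQs => ?_)
    (hs.exists_fg_le_contract_eq_top hQ0)
  exact ⟨⟨hQ0, hQs⟩, s.exists_mem_starMin_le hI hQ ⟨hQ0, hQs⟩ hIQ⟩

end SemistarOperation

theorem starMin_finite_of_starFinite_radicals_general {R K : Type*} [CommRing R] [IsDomain R]
    [Field K] [Algebra R K] [IsFractionRing R K] (s : SemistarOperation R K)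
    (hstable : s.Stable) (hs : s.FiniteType) (I : Ideal R) (hI : I ≠ ⊥)
    (h : ∀ P ∈ s.starMin I, ∃ L : Ideal R, s.IsStarFinite L ∧ P = L.radical) :
    (s.starMin I).Finite := by
  have hF : ∀ P ∈ s.starMin I, ∃ F : Ideal R, F.FG ∧
      ∀ Q : Ideal R, Q.IsPrime → s.IsQuasiStarIdeal Q → (F ≤ Q ↔ P ≤ Q) := fun P hP => by
    obtain ⟨L, hL, rfl⟩ := h P hP
    exact hL.exists_fg_le_iff_radical_le
  choose! F hFfg hFiff using hF
  have hle : ∀ P ∈ s.starMin I, ∀ Q ∈ s.starMin I, F P ≤ Q ↔ P ≤ Q :=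
    fun P hP Q hQ => hFiff P hP Q hQ.1.1 hQ.1.2.1
  obtain ⟨t, htC, ht, htcov⟩ := Ideal.exists_finite_subset_forall_isPrime_exists_le
    (C := F '' s.starMin I ∪ {J | J.FG ∧ J ≠ ⊥ ∧ s.contract J = ⊤})
    (by rintro _ (⟨P, hP, rfl⟩ | hJ); exacts [hFfg P hP, hJ.1]) fun Q hQ hIQ => by
      rcases s.exists_starMin_le_or_exists_fg_contract_eq_top hstable hs hI hQ hIQ with
        ⟨hQs, P, hP, hPQ⟩ | ⟨J, hJ, hJ0, hJQ, hJs⟩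
      exacts [⟨F P, .inl ⟨P, hP, rfl⟩, (hFiff P hP Q hQ hQs).2 hPQ⟩,
        ⟨J, .inr ⟨hJ, hJ0, hJs⟩, hJQ⟩]
  have hinj : Set.InjOn F (s.starMin I) := fun P hP P' hP' hPP' =>
    le_antisymm ((hle P hP P' hP').1 (hPP' ▸ (hle P' hP' P' hP').2 le_rfl))
      ((hle P' hP' P hP).1 (hPP' ▸ (hle P hP P hP).2 le_rfl))
  refine .of_finite_image (ht.subset ?_) hinj
  rintro _ ⟨P, hP, rfl⟩
  obtain ⟨J, hJt, hJP⟩ := htcov P hP.1.1 hP.1.2.2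
  rcases htC hJt with ⟨P', hP', rfl⟩ | ⟨-, hJ0, hJs⟩
  · have hP'P : P' ≤ P := (hle P' hP' P hP).1 hJP
    rwa [le_antisymm hP'P (hP.2 hP'.1 hP'P)] at hJt
  · have hPtop : s.contract P = ⊤ := top_le_iff.1 (hJs ▸ s.contract_mono hJ0 hJP)
    exact absurd (hP.1.2.1.2 ▸ hPtop) hP.1.1.ne_top

/-- Let `⋆` be a stable semistar operation of finite type on the integral domain `R`,
and let `I` be a nonzero ideal of `R` with `I^⋆ ∩ R ≠ R`.  If every quasi-`⋆`-prime
ideal minimal over `I` is the radical of a `⋆`-finite ideal, then `⋆-Min(I)` is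
finite. -/
theorem starMin_finite_of_starFinite_radicals {R K : Type*} [CommRing R] [IsDomain R]
    [Field K] [Algebra R K] [IsFractionRing R K] (s : SemistarOperation R K)
    (hstable : s.Stable) (hs : s.FiniteType) (I : Ideal R) (hI : I ≠ ⊥)
    (hne : s.contract I ≠ ⊤)
    (h : ∀ P ∈ s.starMin I, ∃ L : Ideal R, s.IsStarFinite L ∧ P = L.radical) :
    (s.starMin I).Finite :=
  starMin_finite_of_starFinite_radicals_general s hstable hs I hI h
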